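/- Let g > 0 and q ≥ 1 an integer. For all reals ε, E, E′ with 2 < ε ≤ E ≤ E′ and every k₂ ∈ ℝ, the quantities Φ_q(k₂,E) and Φ_q(k₂,E′) are well defined and Φ_q(k₂,E′) − Φ_q(k₂,E) ≤ (q(ε−1)/(πg√(ε(ε−2)))) · (E′ − E). Consequently, if moreover Φ_q(k₂,E′) − Φ_q(k₂,E) ≥ 1 (as happens for consecutive solutions of the band equation Φ_q(k₂,·) − qω ∈ ℤ), then E′ − E ≥ πg√(ε(ε−2))/(q(ε−1)). (Separation of the surface energy band functions.) -/

import Mathlib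

/-!
Each summand of `Φ_q` is Lipschitz in `E` on `[ε, ∞)`: `arctan` is `1`-Lipschitz, and since
`cos ≥ -1` the inner variable `u = E + cos 2πk` stays in `[ε - 1, ∞)`, where `u ↦ √(u² - 1)` has
the decreasing derivative `u / √(u² - 1) ≤ (ε - 1) / √(ε(ε - 2))`. Summing `q` such bounds gives
the first claim.
-/

/-- `φ(k,E) = (1/π) arctan((1/g)√((E + cos 2πk)² - 1))`. -/
noncomputable def phi (g : ℝ) (k E : ℝ) : ℝ :=
  (1 / Real.pi) * Real.arctan ((1 / g) * Real.sqrt ((E + Real.cos (2 * Real.pi * k)) ^ 2 - 1))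

/-- `Φ_q(k₂,E) = ∑_{l=0}^{q-1} φ(k₂ + l/q, E)`. -/
noncomputable def Phiq (g : ℝ) (q : ℕ) (k₂ E : ℝ) : ℝ :=
  ∑ l ∈ Finset.range q, phi g (k₂ + (l : ℝ) / (q : ℝ)) E

open Real

lemma Real.lipschitzWith_one_arctan : LipschitzWith 1 arctan :=
  lipschitzWith_of_nnnorm_deriv_le differentiable_arctan fun x ↦ by
    rw [deriv_arctan, ← NNReal.coe_le_coe, coe_nnnorm, NNReal.coe_one, norm_div, norm_one,
      Real.norm_of_nonneg (by positivity)]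
    exact div_le_one_of_le₀ (by nlinarith) (by positivity)

lemma Real.arctan_sub_arctan_le {x y : ℝ} (h : y ≤ x) : arctan x - arctan y ≤ x - y := by
  have := lipschitzWith_one_arctan.dist_le_mul x y
  rw [NNReal.coe_one, one_mul, dist_eq_norm, dist_eq_norm,
    Real.norm_of_nonneg (sub_nonneg.2 h)] at this
  exact (le_abs_self _).trans this

lemma mul_sqrt_sq_sub_one_le {a v : ℝ} (ha : 1 ≤ a) (hav : a ≤ v) :
    v * √(a ^ 2 - 1) ≤ a * √(v ^ 2 - 1) := by
  have h := sqrt_le_sqrt (by nlinarith : v ^ 2 * (a ^ 2 - 1) ≤ a ^ 2 * (v ^ 2 - 1))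
  rwa [sqrt_mul (sq_nonneg _), sqrt_mul (sq_nonneg _), sqrt_sq (by linarith),
    sqrt_sq (by linarith)] at h

lemma sqrt_sq_sub_one_sub_le {a u u' : ℝ} (ha : 1 < a) (hau : a ≤ u) (huu' : u ≤ u') :
    √(u' ^ 2 - 1) - √(u ^ 2 - 1) ≤ a / √(a ^ 2 - 1) * (u' - u) := by
  set S := √(a ^ 2 - 1)
  set x := √(u ^ 2 - 1)
  set x' := √(u' ^ 2 - 1)
  have hS : 0 < S := sqrt_pos.2 (by nlinarith)
  have hx : 0 < x := sqrt_pos.2 (by nlinarith)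
  have hx' : 0 ≤ x' := sqrt_nonneg _
  have hx2 : x ^ 2 = u ^ 2 - 1 := sq_sqrt (by nlinarith)
  have hx'2 : x' ^ 2 = u' ^ 2 - 1 := sq_sqrt (by nlinarith)
  have hux : u * S ≤ a * x := mul_sqrt_sq_sub_one_le ha.le hau
  have hux' : u' * S ≤ a * x' := mul_sqrt_sq_sub_one_le ha.le (hau.trans huu')
  rw [div_mul_eq_mul_div, le_div_iff₀ hS]
  -- `x' - x = (u' - u)(u' + u)/(x' + x)`, and `(u' + u) S ≤ a (x' + x)`
  refine le_of_mul_le_mul_right ?_ (by linarith : 0 < x' + x)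
  calc (x' - x) * S * (x' + x) = (u' * S + u * S) * (u' - u) := by
        linear_combination S * hx'2 - S * hx2
    _ ≤ (a * x' + a * x) * (u' - u) := by gcongr
    _ = a * (u' - u) * (x' + x) := by ring

lemma phi_sub_phi_le {g ε E E' : ℝ} (hg : 0 < g) (hε : 2 < ε) (hE : ε ≤ E) (hEE' : E ≤ E')
    (k : ℝ) :
    phi g k E' - phi g k E ≤ (ε - 1) / (π * g * √(ε * (ε - 2))) * (E' - E) := by
  set c := cos (2 * π * k)
  have hc : -1 ≤ c := neg_one_le_cos _
  have hsqrt := sqrt_sq_sub_one_sub_le (a := ε - 1) (u := E + c) (u' := E' + c) (by linarith)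
    (by linarith) (by linarith)
  have hmono : √((E + c) ^ 2 - 1) ≤ √((E' + c) ^ 2 - 1) := sqrt_le_sqrt (by nlinarith)
  rw [show (ε - 1) ^ 2 - 1 = ε * (ε - 2) by ring, add_sub_add_right_eq_sub] at hsqrt
  calc phi g k E' - phi g k E
      = 1 / π * (arctan (1 / g * √((E' + c) ^ 2 - 1)) - arctan (1 / g * √((E + c) ^ 2 - 1))) := by
        rw [phi, phi, mul_sub]
    _ ≤ 1 / π * (1 / g * (√((E' + c) ^ 2 - 1) - √((E + c) ^ 2 - 1))) := by
        gcongr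
        rw [mul_sub]
        exact arctan_sub_arctan_le (by gcongr)
    _ ≤ 1 / π * (1 / g * ((ε - 1) / √(ε * (ε - 2)) * (E' - E))) := by gcongr
    _ = (ε - 1) / (π * g * √(ε * (ε - 2))) * (E' - E) := by field_simp

lemma Phiq_sub_Phiq_le {g ε E E' : ℝ} (hg : 0 < g) (hε : 2 < ε) (hE : ε ≤ E) (hEE' : E ≤ E')
    (q : ℕ) (k₂ : ℝ) :
    Phiq g q k₂ E' - Phiq g q k₂ E ≤ q * (ε - 1) / (π * g * √(ε * (ε - 2))) * (E' - E) := by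
  rw [Phiq, Phiq, ← Finset.sum_sub_distrib, mul_div_assoc, mul_assoc]
  simpa using Finset.sum_le_card_nsmul (Finset.range q) _ _
    fun (l : ℕ) _ ↦ phi_sub_phi_le hg hε hE hEE' (k₂ + l / q)

theorem surface_band_separation_general (g : ℝ) (hg : 0 < g) (q : ℕ)
    (ε E E' : ℝ) (hε : 2 < ε) (hE : ε ≤ E) (hEE' : E ≤ E') (k₂ : ℝ) :
    (Phiq g q k₂ E' - Phiq g q k₂ E
      ≤ ((q : ℝ) * (ε - 1) / (Real.pi * g * Real.sqrt (ε * (ε - 2)))) * (E' - E)) ∧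
    (1 ≤ Phiq g q k₂ E' - Phiq g q k₂ E →
      Real.pi * g * Real.sqrt (ε * (ε - 2)) / ((q : ℝ) * (ε - 1)) ≤ E' - E) := by
  have hsep := Phiq_sub_Phiq_le hg hε hE hEE' q k₂
  refine ⟨hsep, fun hone ↦ div_le_of_le_mul₀ (by nlinarith) (sub_nonneg.2 hEE') ?_⟩
  have hS : 0 < √(ε * (ε - 2)) := sqrt_pos.2 (by nlinarith)
  calc π * g * √(ε * (ε - 2))
      ≤ π * g * √(ε * (ε - 2)) * (q * (ε - 1) / (π * g * √(ε * (ε - 2))) * (E' - E)) := by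
        exact le_mul_of_one_le_right (by positivity) (hone.trans hsep)
    _ = (E' - E) * (q * (ε - 1)) := by field_simp

/-- separation of the surface band functions. For `2 < ε ≤ E ≤ E'`,
`Φ_q(k₂,E') - Φ_q(k₂,E) ≤ (q(ε-1)/(πg√(ε(ε-2))))(E'-E)`; consequently, if
`Φ_q(k₂,E') - Φ_q(k₂,E) ≥ 1` then `E' - E ≥ πg√(ε(ε-2))/(q(ε-1))`. -/
theorem surface_band_separation (g : ℝ) (hg : 0 < g) (q : ℕ) (hq : 1 ≤ q)
    (ε E E' : ℝ) (hε : 2 < ε) (hE : ε ≤ E) (hEE' : E ≤ E') (k₂ : ℝ) :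
    (Phiq g q k₂ E' - Phiq g q k₂ E
      ≤ ((q : ℝ) * (ε - 1) / (Real.pi * g * Real.sqrt (ε * (ε - 2)))) * (E' - E)) ∧
    (1 ≤ Phiq g q k₂ E' - Phiq g q k₂ E →
      Real.pi * g * Real.sqrt (ε * (ε - 2)) / ((q : ℝ) * (ε - 1)) ≤ E' - E) :=
  surface_band_separation_general g hg q ε E E' hε hE hEE' k₂
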